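/- Let f be twice differentiable and strictly convex on (0, ∞), let g and q be probability densities with respect to a measure μ, and let a be a density that is strictly positive wherever g or q is positive, with g/a and q/a integrable against a. Then the noise contrastive divergence D_NC(g, q) = ∫ Br_f(g(x)/a(x), q(x)/a(x)) a(x) μ(dx) is nonnegative, and it equals zero if and only if g = q μ-almost everywhere. -/
import Mathlib


open MeasureTheory

lemma bregman_pos {f : ℝ → ℝ} (hf : ContDiffOn ℝ 2 f (Set.Ioi 0))
    (hconv : StrictConvexOn ℝ (Set.Ioi 0) f) {u v : ℝ} (hu : 0 < u) (hv : 0 < v) (huv : u ≠ v) :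
    0 < f u - f v - deriv f v * (u - v) := by
  have hdiff : ∀ w : ℝ, 0 < w → DifferentiableAt ℝ f w := by
    intro w hw
    exact ((hf.differentiableOn (by norm_num)) w hw).differentiableAt
      (isOpen_Ioi.mem_nhds hw)
  rcases lt_or_gt_of_ne huv with h | h
  · -- u < v : slope f u v < deriv f v
    have := hconv.slope_lt_deriv hu hv h (hdiff v hv)
    rw [slope_def_field] at this
    have hvu : 0 < v - u := by linarith
    rw [div_lt_iff₀ hvu] at this
    nlinarith
  · -- v < u : deriv f v < slope f v u
    have := hconv.deriv_lt_slope hv hu h (hdiff v hv)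
    rw [slope_def_field] at this
    have hvu : 0 < u - v := by linarith
    rw [lt_div_iff₀ hvu] at this
    nlinarith

/-- The noise contrastive divergence
`D_NC(g,q) = ∫ Br_f(g/a, q/a) a dμ` built from a twice differentiable strictly convex
`f` on `(0,∞)` is nonnegative, and it is zero iff `g = q` μ-a.e. -/
theorem stmt6 {α : Type*} [MeasurableSpace α] (μ : Measure α)
    (f : ℝ → ℝ) (hf : ContDiffOn ℝ 2 f (Set.Ioi 0))
    (hconv : StrictConvexOn ℝ (Set.Ioi 0) f)
    (g q a : α → ℝ)
    (hg : ∀ x, 0 < g x) (hq : ∀ x, 0 < q x) (ha : ∀ x, 0 < a x)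
    (hgint : ∫ x, g x ∂μ = 1) (hqint : ∫ x, q x ∂μ = 1)
    (hga : Integrable (fun x => g x) μ) (hqa : Integrable (fun x => q x) μ)
    (hInt : Integrable (fun x =>
      (f (g x / a x) - f (q x / a x) - deriv f (q x / a x) * (g x / a x - q x / a x)) * a x) μ) :
    0 ≤ (∫ x, (f (g x / a x) - f (q x / a x)
            - deriv f (q x / a x) * (g x / a x - q x / a x)) * a x ∂μ) ∧
    ((∫ x, (f (g x / a x) - f (q x / a x)
            - deriv f (q x / a x) * (g x / a x - q x / a x)) * a x ∂μ) = 0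
        ↔ g =ᵐ[μ] q) := by
  set F : α → ℝ := fun x =>
    (f (g x / a x) - f (q x / a x) - deriv f (q x / a x) * (g x / a x - q x / a x)) * a x with hF
  have hFnonneg : ∀ x, 0 ≤ F x := by
    intro x
    rcases eq_or_ne (g x) (q x) with h | h
    · simp [hF, h]
    · have hax := (ha x).ne'
      have hB := bregman_pos hf hconv (div_pos (hg x) (ha x)) (div_pos (hq x) (ha x))
        (fun hc => h (by rwa [div_left_inj' hax] at hc))
      exact (mul_pos hB (ha x)).le
  refine ⟨integral_nonneg hFnonneg, ?_⟩
  rw [integral_eq_zero_iff_of_nonneg hFnonneg hInt]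
  constructor
  · intro h
    filter_upwards [h] with x hx
    by_contra hne
    have hax := (ha x).ne'
    have hgq : g x / a x ≠ q x / a x := fun hc => hne (by rwa [div_left_inj' hax] at hc)
    have hB := bregman_pos hf hconv (div_pos (hg x) (ha x)) (div_pos (hq x) (ha x)) hgq
    have : 0 < F x := mul_pos hB (ha x)
    simp only [Pi.zero_apply] at hx
    linarith
  · intro h
    filter_upwards [h] with x hx
    simp [hF, hx]
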